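/- arXiv:0908.0916 — 2 statements merged into one kernel-verified Lean document; each statement's English description precedes it below -/
import Mathlib

section
/- Suppose R = Σ_{j,l ∈ ℤ} a_{j,l} K^j ⊗ K^l ∈ k[K^{±1}] ⊗ k[K^{±1}] (finite sum) satisfies RΔ(E) = Δ^op(E)R in 𝒰^{≥0}(𝔰𝔩₂) ⊗ 𝒰^{≥0}(𝔰𝔩₂), where q is not a root of unity. Then the coefficients satisfy a_{j,l} = q^{2l} a_{j−1,l} and a_{j,l} = q^{2j} a_{j,l+1} for all j,l ∈ ℤ, and consequently R = 0. -/
/-! Write `R = Σ a_{j,l} K^j ⊗ K^l`. Moving every `E` to the left of the powers of `K` with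
`K^j E = q^{2j} E K^j`, both sides of `Δᵒᵖ(E) R = R Δ(E)` become linear combinations of the tensors
`E^m K^j ⊗ E^n K^l`, which are linearly independent because the `E^m K^j` are. Comparing the
coefficients of `K^j ⊗ E K^l` and of `E K^j ⊗ K^{l+1}` gives the two recurrences. By the second
one, `a_{j,l} ≠ 0` forces `a_{j,l+n} ≠ 0` for all `n ≥ 0`, which is impossible for a finitely
supported family. -/

open TensorProduct

namespace Finsupp

theorem linearCombination_pointwise_smul {α R M : Type*} [CommSemiring R] [AddCommMonoid M]
    [Module R M] (v : α → M) (w : α → R) (a : α →₀ R) :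
    linearCombination R v (w • a) = linearCombination R (w • v) a := by
  induction a using induction_linear with
  | zero => simp
  | add f g hf hg => rw [smul_add, map_add, map_add, hf, hg]
  | single p x =>
    have hsingle : w • single p x = single p (w p * x) := by
      ext q
      by_cases hq : p = q <;> simp [hq]
    rw [hsingle, linearCombination_single, linearCombination_single, Pi.smul_apply', mul_comm,
      mul_smul]

theorem eq_zero_of_forall_ne_zero_imp_add_one {α M : Type*} [Zero M] (a : α × ℤ →₀ M)
    (h : ∀ x n, a (x, n) ≠ 0 → a (x, n + 1) ≠ 0) : a = 0 := by
  by_contra hne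
  obtain ⟨⟨x, n⟩, hxn⟩ := ne_iff.mp hne
  have hup : ∀ m : ℕ, a (x, n + m) ≠ 0 := by
    intro m
    induction m with
    | zero => simpa using hxn
    | succ m ih => simpa [add_assoc] using h x _ ih
  have hinj : Function.Injective fun m : ℕ => (x, n + (m : ℤ)) := fun m m' hm => by
    simpa using hm
  exact Set.infinite_of_injective_forall_mem hinj (fun m => mem_support_iff.mpr (hup m))
    a.support.finite_toSet

end Finsupp

/-- `monomialIndex m n s t (j, l)` is the index of `E^m K^{j+s} ⊗ E^n K^{l+t}` in the tensor
square of the family `pbw E K` below. -/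
def monomialIndex (m n : ℕ) (s t : ℤ) (p : ℤ × ℤ) : (ℕ × ℤ) × (ℕ × ℤ) :=
  ((m, p.1 + s), (n, p.2 + t))

theorem monomialIndex_injective (m n : ℕ) (s t : ℤ) : Function.Injective (monomialIndex m n s t) :=
  fun p p' h => by simpa [monomialIndex, Prod.ext_iff] using h

theorem mapDomain_monomialIndex_apply {M : Type*} [AddCommMonoid M] (f : ℤ × ℤ →₀ M)
    (m n m' n' : ℕ) (s t j l : ℤ) :
    f.mapDomain (monomialIndex m n s t) ((m', j), (n', l)) =
      if m = m' ∧ n = n' then f (j - s, l - t) else 0 := by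
  split_ifs with h
  · obtain ⟨rfl, rfl⟩ := h
    have hidx : ((m, j), (n, l)) = monomialIndex m n s t (j - s, l - t) := by
      simp [monomialIndex]
    rw [hidx, Finsupp.mapDomain_apply (monomialIndex_injective m n s t)]
  · refine Finsupp.mapDomain_of_notMem_range _ _ ?_
    rintro ⟨p, hp⟩
    simp only [monomialIndex, Prod.mk.injEq] at hp
    exact h ⟨hp.1.1, hp.2.1⟩

section QuantumBorel

variable {k H : Type*} [Field k] [Ring H] [Algebra k H] {E : H} {K : Hˣ} {c : k}

theorem units_pow_mul_eq_smul (h : (K : H) * E = c • (E * K)) (n : ℕ) :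
    ((K ^ n : Hˣ) : H) * E = c ^ n • (E * ((K ^ n : Hˣ) : H)) := by
  induction n with
  | zero => simp
  | succ n ih =>
    rw [pow_succ, Units.val_mul, mul_assoc, h, mul_smul_comm, ← mul_assoc, ih, smul_mul_assoc,
      smul_smul, mul_assoc, pow_succ, mul_comm c]

theorem units_inv_mul_eq_smul (hc : c ≠ 0) (h : (K : H) * E = c • (E * K)) :
    ((K⁻¹ : Hˣ) : H) * E = c⁻¹ • (E * ((K⁻¹ : Hˣ) : H)) :=
  calc ((K⁻¹ : Hˣ) : H) * E = ((K⁻¹ : Hˣ) : H) * (E * K) * ((K⁻¹ : Hˣ) : H) := by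
        simp [mul_assoc]
    _ = ((K⁻¹ : Hˣ) : H) * (c⁻¹ • (K * E)) * ((K⁻¹ : Hˣ) : H) := by rw [h, inv_smul_smul₀ hc]
    _ = c⁻¹ • (E * ((K⁻¹ : Hˣ) : H)) := by simp

theorem units_zpow_mul_eq_smul (hc : c ≠ 0) (h : (K : H) * E = c • (E * K)) (j : ℤ) :
    ((K ^ j : Hˣ) : H) * E = c ^ j • (E * ((K ^ j : Hˣ) : H)) := by
  cases j with
  | ofNat n => simpa using units_pow_mul_eq_smul h n
  | negSucc n =>
    simpa [zpow_negSucc, inv_pow] using units_pow_mul_eq_smul (units_inv_mul_eq_smul hc h) (n + 1)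

def pbw (E : H) (K : Hˣ) (p : ℕ × ℤ) : H := E ^ p.1 * ((K ^ p.2 : Hˣ) : H)

@[simp] theorem pbw_zero (j : ℤ) : pbw E K (0, j) = ((K ^ j : Hˣ) : H) := by simp [pbw]

@[simp] theorem pbw_one (j : ℤ) : pbw E K (1, j) = E * ((K ^ j : Hˣ) : H) := by simp [pbw]

theorem mul_units_zpow_tmul (j l : ℤ) :
    ((1 : H) ⊗ₜ[k] E + E ⊗ₜ[k] (K : H)) * (((K ^ j : Hˣ) : H) ⊗ₜ[k] ((K ^ l : Hˣ) : H)) =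
      pbw E K (0, j) ⊗ₜ pbw E K (1, l) + pbw E K (1, j) ⊗ₜ pbw E K (0, l + 1) := by
  simp [add_mul, Algebra.TensorProduct.tmul_mul_tmul, ← Units.val_mul, mul_self_zpow]

theorem units_zpow_tmul_mul (hc : c ≠ 0) (h : (K : H) * E = c • (E * K)) (j l : ℤ) :
    (((K ^ j : Hˣ) : H) ⊗ₜ[k] ((K ^ l : Hˣ) : H)) * (E ⊗ₜ[k] (1 : H) + (K : H) ⊗ₜ[k] E) =
      c ^ j • (pbw E K (1, j) ⊗ₜ pbw E K (0, l)) +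
        c ^ l • (pbw E K (0, j + 1) ⊗ₜ pbw E K (1, l)) := by
  simp [mul_add, Algebra.TensorProduct.tmul_mul_tmul, units_zpow_mul_eq_smul hc h, zpow_add_one,
    smul_tmul', tmul_smul]

theorem coeff_recurrence_of_intertwines (hc : c ≠ 0) (h : (K : H) * E = c • (E * K))
    (hb : LinearIndependent k (pbw E K)) (a : ℤ × ℤ →₀ k)
    (hR : ((1 : H) ⊗ₜ[k] E + E ⊗ₜ[k] (K : H)) *
        a.sum (fun p x => x • (((K ^ p.1 : Hˣ) : H) ⊗ₜ[k] ((K ^ p.2 : Hˣ) : H))) =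
      a.sum (fun p x => x • (((K ^ p.1 : Hˣ) : H) ⊗ₜ[k] ((K ^ p.2 : Hˣ) : H))) *
        (E ⊗ₜ[k] (1 : H) + (K : H) ⊗ₜ[k] E)) (j l : ℤ) :
    a (j, l) = c ^ l * a (j - 1, l) ∧ a (j, l) = c ^ j * a (j, l + 1) := by
  have hcoeff : a.mapDomain (monomialIndex 0 1 0 0) + a.mapDomain (monomialIndex 1 0 0 1) =
      ((fun p : ℤ × ℤ => c ^ p.1) • a).mapDomain (monomialIndex 1 0 0 0) +
        ((fun p : ℤ × ℤ => c ^ p.2) • a).mapDomain (monomialIndex 0 1 1 0) := by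
    apply hb.tmul_of_isDomain hb
    simp only [Finsupp.mul_sum, Finsupp.sum_mul, mul_smul_comm, smul_mul_assoc,
      mul_units_zpow_tmul, units_zpow_tmul_mul hc h, smul_add] at hR
    rw [map_add, map_add, Finsupp.linearCombination_mapDomain, Finsupp.linearCombination_mapDomain,
      Finsupp.linearCombination_mapDomain, Finsupp.linearCombination_mapDomain,
      Finsupp.linearCombination_pointwise_smul, Finsupp.linearCombination_pointwise_smul,
      Finsupp.linearCombination_apply, Finsupp.linearCombination_apply,
      Finsupp.linearCombination_apply, Finsupp.linearCombination_apply,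
      ← Finsupp.sum_add, ← Finsupp.sum_add]
    simpa [monomialIndex] using hR
  constructor
  · simpa [mapDomain_monomialIndex_apply] using DFunLike.congr_fun hcoeff ((0, j), (1, l))
  · simpa [mapDomain_monomialIndex_apply] using DFunLike.congr_fun hcoeff ((1, j), (0, l + 1))

end QuantumBorel

open TensorProduct in
theorem stmt3_general {k : Type*} [Field k]
    {H : Type*} [Ring H] [HopfAlgebra k H]
    (q : k) (hq0 : q ≠ 0)
    (E : H) (K : Hˣ)
    (hrel : (K : H) * E = q ^ 2 • (E * (K : H)))
    (hb1 : LinearIndependent k (fun p : ℕ × ℤ => E ^ p.1 * ((K ^ p.2 : Hˣ) : H)))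
    (hΔE : Coalgebra.comul (R := k) E = E ⊗ₜ[k] (1 : H) + (K : H) ⊗ₜ[k] E)
    (a : ℤ × ℤ →₀ k) (R : H ⊗[k] H)
    (hRdef : R = a.sum fun p c => c • (((K ^ p.1 : Hˣ) : H) ⊗ₜ[k] ((K ^ p.2 : Hˣ) : H)))
    (hR : (TensorProduct.comm k H H) (Coalgebra.comul (R := k) E) * R =
      R * Coalgebra.comul (R := k) E) :
    (∀ j l : ℤ, a (j, l) = q ^ (2 * l) * a (j - 1, l) ∧
      a (j, l) = q ^ (2 * j) * a (j, l + 1)) ∧ a = 0 ∧ R = 0 := by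
  rw [hΔE, map_add, comm_tmul, comm_tmul, hRdef] at hR
  have hpow : ∀ n : ℤ, (q ^ 2) ^ n = q ^ (2 * n) := fun n => by rw [zpow_mul]; norm_cast
  have hrec : ∀ j l : ℤ, a (j, l) = q ^ (2 * l) * a (j - 1, l) ∧
      a (j, l) = q ^ (2 * j) * a (j, l + 1) := fun j l => by
    simpa only [hpow] using coeff_recurrence_of_intertwines (pow_ne_zero 2 hq0) hrel hb1 a hR j l
  have ha : a = 0 := Finsupp.eq_zero_of_forall_ne_zero_imp_add_one a fun j l hne hzero =>
    hne (by rw [(hrec j l).2, hzero, mul_zero])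
  exact ⟨hrec, ha, by rw [hRdef, ha, Finsupp.sum_zero_index]⟩

open TensorProduct in
/-- if `R = Σ_{j,l} a_{j,l} K^j ⊗ K^l` (finite sum) satisfies
`R Δ(E) = Δᵒᵖ(E) R` in `𝒰^{≥0}(𝔰𝔩₂) ⊗ 𝒰^{≥0}(𝔰𝔩₂)` with `q` not a root of unity, then
`a_{j,l} = q^{2l} a_{j−1,l}` and `a_{j,l} = q^{2j} a_{j,l+1}` for all `j, l ∈ ℤ`, and
consequently `R = 0` (all coefficients vanish). -/
theorem stmt3 {k : Type*} [Field k] [IsAlgClosed k] [CharZero k]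
    {H : Type*} [Ring H] [HopfAlgebra k H]
    (q : k) (hq0 : q ≠ 0) (hroot : ∀ n : ℕ, 0 < n → q ^ n ≠ 1)
    (E : H) (K : Hˣ)
    (hrel : (K : H) * E = q ^ 2 • (E * (K : H)))
    (hb1 : LinearIndependent k (fun p : ℕ × ℤ => E ^ p.1 * ((K ^ p.2 : Hˣ) : H)))
    (hb2 : Submodule.span k
      (Set.range fun p : ℕ × ℤ => E ^ p.1 * ((K ^ p.2 : Hˣ) : H)) = ⊤)
    (hΔE : Coalgebra.comul (R := k) E = E ⊗ₜ[k] (1 : H) + (K : H) ⊗ₜ[k] E)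
    (hΔK : Coalgebra.comul (R := k) (K : H) = (K : H) ⊗ₜ[k] (K : H))
    (a : ℤ × ℤ →₀ k) (R : H ⊗[k] H)
    (hRdef : R = a.sum fun p c => c • (((K ^ p.1 : Hˣ) : H) ⊗ₜ[k] ((K ^ p.2 : Hˣ) : H)))
    (hR : (TensorProduct.comm k H H) (Coalgebra.comul (R := k) E) * R =
      R * Coalgebra.comul (R := k) E) :
    (∀ j l : ℤ, a (j, l) = q ^ (2 * l) * a (j - 1, l) ∧
      a (j, l) = q ^ (2 * j) * a (j, l + 1)) ∧ a = 0 ∧ R = 0 :=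
  stmt3_general q hq0 E K hrel hb1 hΔE a R hRdef hR
end

section
/- For q not a root of unity and σ, σ' ∈ k^×, there is an isomorphism of 𝒰^{≥0}(𝔰𝔩₂)-modules M(σ) ⊗ M(σ') ≅ ⊕_{m=0}^{∞} M(q^{2m} σ σ'), with the summand indexed by m generated by the lowest weight vector E^m·v_σ ⊗ v_{σ'}. -/
/-- A module over the half quantum group `𝒰^{≥0}(𝔰𝔩₂) = k⟨E, K^{±1}⟩` with relation
`K E K⁻¹ = q² E`, presented as a vector space with operators `E`, `K`, `K⁻¹`. -/
structure HalfQModule (k : Type*) [Field k] (q : k) (V : Type*)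
    [AddCommGroup V] [Module k V] where
  E : V →ₗ[k] V
  K : V →ₗ[k] V
  Kinv : V →ₗ[k] V
  hK1 : K ∘ₗ Kinv = LinearMap.id
  hK2 : Kinv ∘ₗ K = LinearMap.id
  rel : K ∘ₗ E = q ^ 2 • (E ∘ₗ K)

variable {k : Type*} [Field k] {q : k}

/-- `(M, v)` is a Verma module of weight `σ`: `{E^m · v}` is a `k`-basis and
`K·(E^m·v) = q^{2m}σ E^m·v`. -/
def IsVerma {V : Type*} [AddCommGroup V] [Module k V] (σ : k)
    (M : HalfQModule k q V) (v : V) : Prop :=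
  (∀ m : ℕ, M.K ((M.E ^ m) v) = (q ^ (2 * m) * σ) • ((M.E ^ m) v)) ∧
  LinearIndependent k (fun m : ℕ => (M.E ^ m) v) ∧
  Submodule.span k (Set.range fun m : ℕ => (M.E ^ m) v) = ⊤

/-- A subspace invariant under the 𝒰^{≥0}-action, i.e. a submodule. -/
def Invt {V : Type*} [AddCommGroup V] [Module k V] (M : HalfQModule k q V)
    (p : Submodule k V) : Prop :=
  (∀ x ∈ p, M.E x ∈ p) ∧ (∀ x ∈ p, M.K x ∈ p) ∧ (∀ x ∈ p, M.Kinv x ∈ p)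

/-- A homomorphism of 𝒰^{≥0}(𝔰𝔩₂)-modules. -/
def IsHom {V W : Type*} [AddCommGroup V] [Module k V] [AddCommGroup W] [Module k W]
    (M : HalfQModule k q V) (N : HalfQModule k q W) (f : V →ₗ[k] W) : Prop :=
  f ∘ₗ M.E = N.E ∘ₗ f ∧ f ∘ₗ M.K = N.K ∘ₗ f

/-- A weight module: direct sum of the `K`-eigenspaces for `σ ∈ k^×`. -/
def IsWeight {V : Type*} [AddCommGroup V] [Module k V] (M : HalfQModule k q V) : Prop :=
  (⨆ σ : kˣ, LinearMap.ker (M.K - (σ : k) • LinearMap.id)) = ⊤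

open TensorProduct in
/-- `T` is the tensor product module structure on `V ⊗ W` induced by the comultiplication
`ΔK = K⊗K`, `ΔE = E⊗1 + K⊗E` of `𝒰^{≥0}(𝔰𝔩₂)`. -/
def IsTensorStruct {V W : Type*} [AddCommGroup V] [Module k V] [AddCommGroup W] [Module k W]
    (A : HalfQModule k q V) (B : HalfQModule k q W) (T : HalfQModule k q (V ⊗[k] W)) : Prop :=
  T.K = TensorProduct.map A.K B.K ∧
  T.E = TensorProduct.map A.E LinearMap.id + TensorProduct.map A.K B.E

/-- The 1-dimensional module `V_σ`: `K` acts by `σ ∈ k^×`, `E` by `0`. -/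
def scalarMod (q : k) (σ : kˣ) : HalfQModule k q k where
  E := 0
  K := (σ : k) • LinearMap.id
  Kinv := ((σ⁻¹ : kˣ) : k) • LinearMap.id
  hK1 := by apply LinearMap.ext; intro x; simp [smul_smul]
  hK2 := by apply LinearMap.ext; intro x; simp [smul_smul]
  rel := by simp

/-! With `b (a, c) = E^a v ⊗ E^c w` the tensor product basis, `ΔE = E ⊗ 1 + K ⊗ E` gives
`E · b (a, c) = b (a + 1, c) + q^{2a} σ · b (a, c + 1)`. Hence `E^j (E^m v ⊗ w)` is
`(q^{2m} σ)^j · b (m, j)` plus a combination of `b (a, c)` with `a + c = m + j` and `a > m`: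
the family is triangular with nonzero diagonal for the degree-lexicographic order on `(a, c)`,
hence linearly independent. Solving the same formula for `b (a, c + 1)` shows, by induction
on `c`, that every `b (a, c)` lies in the sum of the cyclic submodules generated by the
`b (m, 0) = E^m v ⊗ w`. -/

open Submodule in
theorem Module.Basis.linearIndependent_of_sub_smul_mem_span {ι α R M : Type*} [LinearOrder α]
    [Ring R] [NoZeroDivisors R] [AddCommGroup M] [Module R M] (b : Basis ι R M) (φ : ι → α)
    {f : ι → M} {d : ι → R} (hd : ∀ i, d i ≠ 0)
    (hf : ∀ i, f i - d i • b i ∈ span R (b '' {j | φ i < φ j})) : LinearIndependent R f := by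
  classical
  have hcoef : ∀ i j, ¬ φ i < φ j → b.repr (f i) j = if i = j then d i else 0 := by
    intro i j hij
    have h : b.repr (f i - d i • b i) j = 0 := by
      by_contra h
      exact hij (b.mem_span_image.mp (hf i) (Finsupp.mem_support_iff.mpr h))
    rw [map_sub, map_smul, b.repr_self, Finsupp.sub_apply, sub_eq_zero] at h
    rw [h, Finsupp.smul_apply, Finsupp.single_apply]
    split_ifs <;> simp
  rw [linearIndependent_iff']
  intro s g hsum i hi
  by_contra hgi
  obtain ⟨i₀, hi₀, hmin⟩ := (s.filter (g · ≠ 0)).exists_min_image φ ⟨i, by simp [hi, hgi]⟩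
  rw [Finset.mem_filter] at hi₀
  have h := congrArg (fun x => b.repr x i₀) hsum
  simp only [map_sum, map_smul, Finsupp.finsetSum_apply, Finsupp.smul_apply, smul_eq_mul,
    map_zero, Finsupp.coe_zero, Pi.zero_apply] at h
  rw [Finset.sum_eq_single_of_mem i₀ hi₀.1, hcoef _ _ (lt_irrefl _), if_pos rfl] at h
  · exact hi₀.2 ((mul_eq_zero.mp h).resolve_right (hd i₀))
  · intro j hj hji
    by_cases hgj : g j = 0
    · rw [hgj, zero_mul]
    · rw [hcoef _ _ (not_lt.mpr (hmin j (by simp [hj, hgj]))), if_neg hji, mul_zero]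

open Submodule in
theorem Module.End.apply_mem_iSup_span_range_pow {ι R M : Type*} [Semiring R] [AddCommMonoid M]
    [Module R M] (f : Module.End R M) (x : ι → M) {y : M}
    (hy : y ∈ ⨆ i, span R (Set.range fun j : ℕ => (f ^ j) (x i))) :
    f y ∈ ⨆ i, span R (Set.range fun j : ℕ => (f ^ j) (x i)) := by
  suffices h : (⨆ i, span R (Set.range fun j : ℕ => (f ^ j) (x i))) ≤
      (⨆ i, span R (Set.range fun j : ℕ => (f ^ j) (x i))).comap f from h hy
  refine iSup_le fun i => span_le.mpr <| Set.range_subset_iff.mpr fun j => ?_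
  exact mem_iSup_of_mem i (subset_span ⟨j + 1, by simp only [pow_succ', Module.End.mul_apply]⟩)

def degLex (p : ℕ × ℕ) : ℕ ×ₗ ℕ :=
  toLex (p.1 + p.2, p.1)

namespace HalfQModule

variable {V : Type*} [AddCommGroup V] [Module k V]
  (M : HalfQModule k q V)

theorem K_E_apply (x : V) : M.K (M.E x) = q ^ 2 • M.E (M.K x) :=
  LinearMap.congr_fun M.rel x

theorem K_E_pow_apply_of_K_apply {x : V} {μ : k} (hx : M.K x = μ • x) (j : ℕ) :
    M.K ((M.E ^ j) x) = (q ^ (2 * j) * μ) • (M.E ^ j) x := by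
  induction j with
  | zero => simpa using hx
  | succ j ih =>
    rw [pow_succ', Module.End.mul_apply, K_E_apply, ih, map_smul, smul_smul]
    congr 1
    ring

end HalfQModule

namespace IsVerma

variable {V : Type*} [AddCommGroup V] [Module k V] {σ : k}
  {M : HalfQModule k q V} {v : V}

theorem K_apply (h : IsVerma σ M v) : M.K v = σ • v := by
  simpa using h.1 0

noncomputable def basis (h : IsVerma σ M v) : Module.Basis ℕ k V :=
  .mk h.2.1 h.2.2.ge

@[simp]
theorem basis_apply (h : IsVerma σ M v) (m : ℕ) : h.basis m = (M.E ^ m) v :=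
  Module.Basis.mk_apply _ _ _

end IsVerma

namespace IsTensorStruct

open TensorProduct Submodule

variable {V W : Type*} [AddCommGroup V] [Module k V] [AddCommGroup W] [Module k W]
  {σ σ' : k} {A : HalfQModule k q V} {v : V} {B : HalfQModule k q W} {w : W}
  {T : HalfQModule k q (V ⊗[k] W)}

theorem K_tmul (hT : IsTensorStruct A B T) (x : V) (y : W) :
    T.K (x ⊗ₜ y) = A.K x ⊗ₜ B.K y := by
  rw [hT.1, map_tmul]

theorem E_tmul (hT : IsTensorStruct A B T) (x : V) (y : W) :
    T.E (x ⊗ₜ y) = A.E x ⊗ₜ y + A.K x ⊗ₜ B.E y := by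
  rw [hT.2, LinearMap.add_apply, map_tmul, map_tmul, LinearMap.id_apply]

theorem K_E_pow_tmul (hT : IsTensorStruct A B T) (hA : IsVerma σ A v) (hB : IsVerma σ' B w)
    (m j : ℕ) : T.K ((T.E ^ j) ((A.E ^ m) v ⊗ₜ w)) =
      (q ^ (2 * (m + j)) * (σ * σ')) • (T.E ^ j) ((A.E ^ m) v ⊗ₜ w) := by
  have hK : T.K ((A.E ^ m) v ⊗ₜ w) = (q ^ (2 * m) * σ * σ') • ((A.E ^ m) v ⊗ₜ w) := by
    rw [hT.K_tmul, hA.1 m, hB.K_apply, smul_tmul_smul, mul_assoc]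
  rw [T.K_E_pow_apply_of_K_apply hK]
  congr 1
  ring

theorem E_basis_tensorProduct (hT : IsTensorStruct A B T) (hA : IsVerma σ A v)
    (hB : IsVerma σ' B w) (a c : ℕ) :
    T.E (hA.basis.tensorProduct hB.basis (a, c)) =
      hA.basis.tensorProduct hB.basis (a + 1, c) +
        (q ^ (2 * a) * σ) • hA.basis.tensorProduct hB.basis (a, c + 1) := by
  simp only [Module.Basis.tensorProduct_apply, IsVerma.basis_apply]
  rw [hT.E_tmul, hA.1 a, pow_succ' A.E, pow_succ' B.E, Module.End.mul_apply,
    Module.End.mul_apply, smul_tmul']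

theorem E_mem_span_degLex_lt (hT : IsTensorStruct A B T) (hA : IsVerma σ A v)
    (hB : IsVerma σ' B w) (m j : ℕ) {x : V ⊗[k] W}
    (hx : x ∈ span k (hA.basis.tensorProduct hB.basis '' {i | degLex (m, j) < degLex i})) :
    T.E x ∈ span k (hA.basis.tensorProduct hB.basis '' {i | degLex (m, j + 1) < degLex i}) := by
  refine mem_comap.mp ((span_le (p := comap T.E _)).mpr ?_ hx)
  rintro _ ⟨⟨a, c⟩, hac, rfl⟩
  simp only [Set.mem_ofPred_eq, degLex, Prod.Lex.toLex_lt_toLex] at hac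
  rw [SetLike.mem_coe, mem_comap, hT.E_basis_tensorProduct hA hB]
  refine add_mem (subset_span ⟨_, ?_, rfl⟩) (smul_mem _ _ (subset_span ⟨_, ?_, rfl⟩)) <;>
    simp only [Set.mem_ofPred_eq, degLex, Prod.Lex.toLex_lt_toLex] <;> omega

theorem E_pow_tmul_sub_smul_mem_span (hT : IsTensorStruct A B T) (hA : IsVerma σ A v)
    (hB : IsVerma σ' B w) (m j : ℕ) :
    (T.E ^ j) ((A.E ^ m) v ⊗ₜ w) - (q ^ (2 * m) * σ) ^ j • hA.basis.tensorProduct hB.basis (m, j)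
      ∈ span k (hA.basis.tensorProduct hB.basis '' {i | degLex (m, j) < degLex i}) := by
  induction j with
  | zero => simp
  | succ j ih =>
    have h : (T.E ^ (j + 1)) ((A.E ^ m) v ⊗ₜ w) -
        (q ^ (2 * m) * σ) ^ (j + 1) • hA.basis.tensorProduct hB.basis (m, j + 1) =
        T.E ((T.E ^ j) ((A.E ^ m) v ⊗ₜ w) -
          (q ^ (2 * m) * σ) ^ j • hA.basis.tensorProduct hB.basis (m, j)) +
        (q ^ (2 * m) * σ) ^ j • hA.basis.tensorProduct hB.basis (m + 1, j) := by
      rw [map_sub, map_smul, hT.E_basis_tensorProduct hA hB, pow_succ' T.E, Module.End.mul_apply]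
      module
    rw [h]
    refine add_mem (hT.E_mem_span_degLex_lt hA hB m j ih) (smul_mem _ _ (subset_span ⟨_, ?_, rfl⟩))
    simp only [Set.mem_ofPred_eq, degLex, Prod.Lex.toLex_lt_toLex]
    omega

theorem linearIndependent_E_pow_tmul (hT : IsTensorStruct A B T) (hA : IsVerma σ A v)
    (hB : IsVerma σ' B w) (hq0 : q ≠ 0) (hσ : σ ≠ 0) :
    LinearIndependent k fun p : ℕ × ℕ => (T.E ^ p.2) ((A.E ^ p.1) v ⊗ₜ w) :=
  (hA.basis.tensorProduct hB.basis).linearIndependent_of_sub_smul_mem_span degLex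
    (fun _ => pow_ne_zero _ (mul_ne_zero (pow_ne_zero _ hq0) hσ))
    (fun p => hT.E_pow_tmul_sub_smul_mem_span hA hB p.1 p.2)

theorem iSup_span_E_pow_tmul_eq_top (hT : IsTensorStruct A B T) (hA : IsVerma σ A v)
    (hB : IsVerma σ' B w) (hq0 : q ≠ 0) (hσ : σ ≠ 0) :
    ⨆ m : ℕ, span k (Set.range fun j : ℕ => (T.E ^ j) ((A.E ^ m) v ⊗ₜ w)) = ⊤ := by
  set S := ⨆ m : ℕ, span k (Set.range fun j : ℕ => (T.E ^ j) ((A.E ^ m) v ⊗ₜ w))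
  have hbasis : ∀ c a, hA.basis.tensorProduct hB.basis (a, c) ∈ S := by
    intro c
    induction c with
    | zero => exact fun a => mem_iSup_of_mem a (subset_span ⟨0, by simp⟩)
    | succ c ih =>
      intro a
      have h : (q ^ (2 * a) * σ) • hA.basis.tensorProduct hB.basis (a, c + 1) =
          T.E (hA.basis.tensorProduct hB.basis (a, c)) -
            hA.basis.tensorProduct hB.basis (a + 1, c) := by
        rw [hT.E_basis_tensorProduct hA hB]
        abel
      refine (S.smul_mem_iff (mul_ne_zero (pow_ne_zero (2 * a) hq0) hσ)).mp ?_
      rw [h]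
      exact S.sub_mem (Module.End.apply_mem_iSup_span_range_pow T.E _ (ih a)) (ih (a + 1))
  rw [eq_top_iff, ← (hA.basis.tensorProduct hB.basis).span_eq, span_le]
  rintro _ ⟨⟨a, c⟩, rfl⟩
  exact hbasis c a

end IsTensorStruct

open TensorProduct in
theorem stmt16_general {k : Type*} [Field k] (q : k) (hq0 : q ≠ 0)
    (σ σ' : k) (hσ : σ ≠ 0)
    {V W : Type*} [AddCommGroup V] [Module k V] [AddCommGroup W] [Module k W]
    (A : HalfQModule k q V) (v : V) (hA : IsVerma σ A v)
    (B : HalfQModule k q W) (w : W) (hB : IsVerma σ' B w)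
    (T : HalfQModule k q (V ⊗[k] W)) (hT : IsTensorStruct A B T)
    (u : ℕ → V ⊗[k] W) (hu : ∀ m : ℕ, u m = ((A.E ^ m) v) ⊗ₜ[k] w) :
    (∀ m j : ℕ, T.K ((T.E ^ j) (u m)) =
        (q ^ (2 * (m + j)) * (σ * σ')) • ((T.E ^ j) (u m))) ∧
    LinearIndependent k (fun p : ℕ × ℕ => (T.E ^ p.2) (u p.1)) ∧
    (⨆ m : ℕ, Submodule.span k (Set.range fun j : ℕ => (T.E ^ j) (u m))) = ⊤ := by
  obtain rfl : u = fun m => (A.E ^ m) v ⊗ₜ[k] w := funext hu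
  exact ⟨hT.K_E_pow_tmul hA hB, hT.linearIndependent_E_pow_tmul hA hB hq0 hσ,
    hT.iSup_span_E_pow_tmul_eq_top hA hB hq0 hσ⟩

open TensorProduct in
/-- `M(σ) ⊗ M(σ') ≅ ⊕_{m ∈ ℕ} M(q^{2m} σ σ')`, the summand indexed by `m`
being generated by the lowest weight vector `E^m·v_σ ⊗ v_{σ'}`: the vectors
`E^j·(E^m·v_σ ⊗ v_{σ'})` form a k-basis of the tensor product, have weight
`q^{2(m+j)} σ σ'`, and the cyclic submodules generated by the `E^m·v_σ ⊗ v_{σ'}` fill up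
the whole module. -/
theorem stmt16 {k : Type*} [Field k] (q : k) (hq0 : q ≠ 0)
    (hq : ∀ n : ℕ, 0 < n → q ^ n ≠ 1) (σ σ' : k) (hσ : σ ≠ 0) (hσ' : σ' ≠ 0)
    {V W : Type*} [AddCommGroup V] [Module k V] [AddCommGroup W] [Module k W]
    (A : HalfQModule k q V) (v : V) (hA : IsVerma σ A v)
    (B : HalfQModule k q W) (w : W) (hB : IsVerma σ' B w)
    (T : HalfQModule k q (V ⊗[k] W)) (hT : IsTensorStruct A B T)
    (u : ℕ → V ⊗[k] W) (hu : ∀ m : ℕ, u m = ((A.E ^ m) v) ⊗ₜ[k] w) :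
    (∀ m j : ℕ, T.K ((T.E ^ j) (u m)) =
        (q ^ (2 * (m + j)) * (σ * σ')) • ((T.E ^ j) (u m))) ∧
    LinearIndependent k (fun p : ℕ × ℕ => (T.E ^ p.2) (u p.1)) ∧
    (⨆ m : ℕ, Submodule.span k (Set.range fun j : ℕ => (T.E ^ j) (u m))) = ⊤ :=
  stmt16_general q hq0 σ σ' hσ A v hA B w hB T hT u hu
end
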